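/- For all m, n ∈ ℕ, let K_{m,n} be the diagonal F-linear endomorphism of V_{m+n} with K_{m,n}(e_{ι₁ i}) = q^{m−1−2i} · e_{ι₁ i} for i ∈ Fin m and K_{m,n}(e_{ι₂ j}) = q^{n−1−2j} · e_{ι₂ j} for j ∈ Fin n. Then: (a) ptr₂((id ⊗ K_{m,n}) ∘ c_{m,n}) = q^m · P₁ + q^n · P₂, where P₁ (resp. P₂) is the projection of V_{m+n} fixing each e_{ι₁ i} (resp. each e_{ι₂ j}) and annihilating the other basis vectors; and (b) the trace of K_{m,n} equals [m]_q + [n]_q. (These are the GL_m × GL_n specializations of the modified twist and dimension relations in the paper's Lemma on Rep_q L_t.) -/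

import Mathlib

open scoped TensorProduct

set_option synthInstance.maxHeartbeats 1000000
set_option maxHeartbeats 1000000
noncomputable section

abbrev F : Type := RatFunc ℂ

def q : F := RatFunc.X

abbrev V (N : ℕ) : Type := Fin N → F

def bV (N : ℕ) : Module.Basis (Fin N) F (V N) := Pi.basisFun F (Fin N)

def e {N : ℕ} (i : Fin N) : V N := bV N i

def bVV (N : ℕ) : Module.Basis (Fin N × Fin N) F (V N ⊗[F] V N) :=
  (bV N).tensorProduct (bV N)

/-- The HOMFLY R-matrix β_N. -/
def β (N : ℕ) : V N ⊗[F] V N →ₗ[F] V N ⊗[F] V N :=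
  (bVV N).constr F fun p =>
    if p.1 = p.2 then q • (e p.1 ⊗ₜ[F] e p.1)
    else if p.1 < p.2 then e p.2 ⊗ₜ[F] e p.1
    else e p.2 ⊗ₜ[F] e p.1 + (q - q⁻¹) • (e p.1 ⊗ₜ[F] e p.2)

/-- Linear inclusion induced by a map of index sets. -/
def emb {a N : ℕ} (f : Fin a → Fin N) : V a →ₗ[F] V N :=
  (bV a).constr F fun i => e (f i)

def ι₁ (m n : ℕ) : Fin m → Fin (m + n) := Fin.castAdd n
def ι₂ (m n : ℕ) : Fin n → Fin (m + n) := Fin.natAdd m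

/-- The Levi braiding c_{m,n}. -/
def levi (m n : ℕ) : V (m + n) ⊗[F] V (m + n) →ₗ[F] V (m + n) ⊗[F] V (m + n) :=
  (bVV (m + n)).constr F fun p =>
    if ha : (p.1 : ℕ) < m then
      if hb : (p.2 : ℕ) < m then
        TensorProduct.map (emb (ι₁ m n)) (emb (ι₁ m n))
          (β m (e ⟨p.1, ha⟩ ⊗ₜ[F] e ⟨p.2, hb⟩))
      else e p.2 ⊗ₜ[F] e p.1
    else
      if hb : (p.2 : ℕ) < m then e p.2 ⊗ₜ[F] e p.1
      else
        TensorProduct.map (emb (ι₂ m n)) (emb (ι₂ m n))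
          (β n (e ⟨(p.1 : ℕ) - m, by have := p.1.isLt; omega⟩ ⊗ₜ[F]
                e ⟨(p.2 : ℕ) - m, by have := p.2.isLt; omega⟩))

/-- Partial trace over the second tensor factor. -/
def ptr {N : ℕ} (Φ : V N ⊗[F] V N →ₗ[F] V N ⊗[F] V N) : V N →ₗ[F] V N :=
  (bV N).constr F fun i =>
    ∑ j : Fin N,
      (TensorProduct.rid F (V N))
        (TensorProduct.map LinearMap.id (LinearMap.proj j) (Φ (e i ⊗ₜ[F] e j)))

/-- Quantum integer [n]_q. -/
def qint (n : ℤ) : F := (q ^ n - q ^ (-n)) / (q - q⁻¹)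

/-- The diagonal operator `K_{m,n}` with `K (e (ι₁ i)) = q^(m-1-2i) • e (ι₁ i)` and
`K (e (ι₂ j)) = q^(n-1-2j) • e (ι₂ j)`. -/
def Kmn (m n : ℕ) : V (m + n) →ₗ[F] V (m + n) :=
  (bV (m + n)).constr F fun a =>
    if (a : ℕ) < m then (q ^ ((m : ℤ) - 1 - 2 * (a.val : ℤ))) • e a
    else (q ^ ((n : ℤ) - 1 - 2 * ((a.val : ℤ) - (m : ℤ)))) • e a

/-- The projection of `V (m+n)` onto the green block spanned by the `e (ι₁ i)`. -/
def P1 (m n : ℕ) : V (m + n) →ₗ[F] V (m + n) :=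
  (bV (m + n)).constr F fun a => if (a : ℕ) < m then e a else 0

/-- The projection of `V (m+n)` onto the red block spanned by the `e (ι₂ j)`. -/
def P2 (m n : ℕ) : V (m + n) →ₗ[F] V (m + n) :=
  (bV (m + n)).constr F fun a => if m ≤ (a : ℕ) then e a else 0

/-!
Since `K_{m,n}` is diagonal, the partial trace of `(id ⊗ K) ∘ c` only sees the diagonal matrix
coefficients `⟨e_a ⊗ e_b | c | e_a ⊗ e_b⟩`. These vanish when `a` and `b` lie in different blocks,
and inside a block they are those of `β`: `q` for `b = a`, `q - q⁻¹` for `b < a`, and `0` for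
`b > a`. Weighted by `q^(N-1-2b)` they telescope to `q^N`; the same telescoping sum gives
`∑_b q^(N-1-2b) = [N]_q`, hence the trace.
-/

lemma q_ne_zero : q ≠ 0 := RatFunc.X_ne_zero

lemma q_sub_q_inv_ne_zero : q - q⁻¹ ≠ 0 := by
  intro h
  have hq2 : q ^ 2 = 1 :=
    calc q ^ 2 = q * q⁻¹ := by rw [sq, ← sub_eq_zero.mp h]
      _ = 1 := mul_inv_cancel₀ q_ne_zero
  have hX2 : (Polynomial.X ^ 2 : Polynomial ℂ) = 1 := by
    apply IsFractionRing.injective (Polynomial ℂ) F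
    push_cast [q, RatFunc.X] at hq2 ⊢
    simpa using hq2
  simpa using congrArg (Polynomial.eval 0) hX2

lemma sum_range_sub_inv_mul_zpow {K : Type*} [Field K] {x : K} (hx : x ≠ 0) (c : ℤ) (a : ℕ) :
    ∑ k ∈ Finset.range a, (x - x⁻¹) * x ^ (c - 1 - 2 * (k : ℤ))
      = x ^ c - x ^ (c - 2 * (a : ℤ)) := by
  have step (k : ℕ) : (x - x⁻¹) * x ^ (c - 1 - 2 * (k : ℤ))
      = x ^ (c - 2 * (k : ℤ)) - x ^ (c - 2 * ((k + 1 : ℕ) : ℤ)) := by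
    rw [show c - 2 * (k : ℤ) = c - 1 - 2 * k + 1 by ring,
      show c - 2 * ((k + 1 : ℕ) : ℤ) = c - 1 - 2 * k - 1 by push_cast; ring,
      zpow_add_one₀ hx, zpow_sub_one₀ hx]
    ring
  simp_rw [step]
  rw [Finset.sum_range_sub' (fun k : ℕ => x ^ (c - 2 * (k : ℤ)))]
  simp

def qWeight (N : ℕ) (k : Fin N) : F := q ^ ((N : ℤ) - 1 - 2 * (k : ℤ))

lemma qint_eq_sum_qWeight (N : ℕ) : qint N = ∑ k, qWeight N k := by
  unfold qWeight
  rw [qint, div_eq_iff q_sub_q_inv_ne_zero, Finset.sum_mul,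
    Fin.sum_univ_eq_sum_range (fun k : ℕ => q ^ ((N : ℤ) - 1 - 2 * (k : ℤ)) * (q - q⁻¹)) N]
  simp_rw [mul_comm _ (q - q⁻¹)]
  rw [sum_range_sub_inv_mul_zpow q_ne_zero, show (N : ℤ) - 2 * N = -N by ring]

def βDiag {N : ℕ} (i k : Fin N) : F := if k = i then q else if k < i then q - q⁻¹ else 0

lemma sum_βDiag_mul_qWeight {N : ℕ} (i : Fin N) : ∑ k, βDiag i k * qWeight N k = q ^ (N : ℤ) := by
  have hsplit (k : Fin N) : βDiag i k * qWeight N k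
      = (if k = i then q * qWeight N i else 0)
        + (if k < i then (q - q⁻¹) * qWeight N k else 0) := by
    unfold βDiag
    split_ifs <;> simp_all
  have hbelow : ∑ k, (if k < i then (q - q⁻¹) * qWeight N k else 0)
      = ∑ k ∈ Finset.range i, (q - q⁻¹) * q ^ ((N : ℤ) - 1 - 2 * (k : ℤ)) := by
    rw [← Finset.sum_filter, Finset.filter_gt_eq_Iio, ← Nat.Iio_eq_range,
      ← Fin.map_valEmbedding_Iio, Finset.sum_map]
    rfl
  rw [Finset.sum_congr rfl fun k _ => hsplit k, Finset.sum_add_distrib, Finset.sum_ite_eq',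
    if_pos (Finset.mem_univ _), hbelow, sum_range_sub_inv_mul_zpow q_ne_zero, qWeight,
    ← zpow_one_add₀ q_ne_zero]
  ring_nf

@[simp]
lemma bV_apply {N : ℕ} (i : Fin N) : bV N i = e i := rfl

@[simp]
lemma bV_repr_apply {N : ℕ} (x : V N) (i : Fin N) : (bV N).repr x i = x i := rfl

lemma e_apply {N : ℕ} (i j : Fin N) : e i j = if j = i then 1 else 0 := by
  simp [e, bV, Pi.single_apply]

lemma bVV_apply (N : ℕ) (i j : Fin N) : bVV N (i, j) = e i ⊗ₜ[F] e j := by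
  simp [bVV, Module.Basis.tensorProduct_apply]

lemma emb_e {a N : ℕ} (f : Fin a → Fin N) (i : Fin a) : emb f (e i) = e (f i) :=
  (bV a).constr_basis F _ i

lemma emb_apply_apply {a N : ℕ} {f : Fin a → Fin N} (hf : Function.Injective f) (y : V a)
    (j : Fin a) : emb f y (f j) = y j := by
  have hproj : LinearMap.proj (f j) ∘ₗ emb f = LinearMap.proj j :=
    (bV a).ext fun i => by simp [emb_e, e_apply, hf.eq_iff]
  exact LinearMap.congr_fun hproj y

def slice {N : ℕ} (j : Fin N) : V N ⊗[F] V N →ₗ[F] V N :=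
  (TensorProduct.rid F (V N)).toLinearMap ∘ₗ TensorProduct.map LinearMap.id (LinearMap.proj j)

@[simp]
lemma slice_tmul {N : ℕ} (j : Fin N) (x y : V N) : slice j (x ⊗ₜ y) = y j • x := rfl

lemma ptr_apply_e {N : ℕ} (Φ : V N ⊗[F] V N →ₗ[F] V N ⊗[F] V N) (i : Fin N) :
    ptr Φ (e i) = ∑ j, slice j (Φ (e i ⊗ₜ e j)) :=
  (bV N).constr_basis F _ i

lemma apply_eq_mul_of_apply_e {N : ℕ} {T : V N →ₗ[F] V N} {w : Fin N → F}
    (hT : ∀ a, T (e a) = w a • e a) (y : V N) (j : Fin N) : T y j = w j * y j := by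
  have hproj : LinearMap.proj j ∘ₗ T = w j • LinearMap.proj j :=
    (bV N).ext fun a => by
      by_cases hja : j = a <;> simp [hT, e_apply, hja]
  exact LinearMap.congr_fun hproj y

lemma slice_map_id {N : ℕ} {T : V N →ₗ[F] V N} {w : Fin N → F}
    (hT : ∀ a, T (e a) = w a • e a) (j : Fin N) (t : V N ⊗[F] V N) :
    slice j (TensorProduct.map LinearMap.id T t) = w j • slice j t := by
  induction t using TensorProduct.induction_on with
  | zero => simp
  | tmul x y => simp [apply_eq_mul_of_apply_e hT, mul_smul]
  | add s t hs ht => simp [hs, ht]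

lemma ptr_map_id_comp_apply_e {N : ℕ} {T : V N →ₗ[F] V N} {w : Fin N → F}
    (hT : ∀ a, T (e a) = w a • e a) (Φ : V N ⊗[F] V N →ₗ[F] V N ⊗[F] V N) (i : Fin N) :
    ptr (TensorProduct.map LinearMap.id T ∘ₗ Φ) (e i) = ∑ j, w j • slice j (Φ (e i ⊗ₜ e j)) := by
  simp only [ptr_apply_e, LinearMap.comp_apply, slice_map_id hT]

lemma trace_eq_sum_of_apply_e {N : ℕ} {T : V N →ₗ[F] V N} {w : Fin N → F}
    (hT : ∀ a, T (e a) = w a • e a) : LinearMap.trace F (V N) T = ∑ a, w a := by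
  rw [LinearMap.trace_eq_matrix_trace F (bV N), Matrix.trace]
  refine Finset.sum_congr rfl fun a _ => ?_
  simp [LinearMap.toMatrix_apply, hT, e_apply]

lemma slice_map_emb {a N : ℕ} {f : Fin a → Fin N} (hf : Function.Injective f) (j : Fin a)
    (t : V a ⊗[F] V a) :
    slice (f j) (TensorProduct.map (emb f) (emb f) t) = emb f (slice j t) := by
  induction t using TensorProduct.induction_on with
  | zero => simp
  | tmul x y => simp [emb_apply_apply hf]
  | add s t hs ht => simp [hs, ht]

lemma β_tmul (N : ℕ) (i k : Fin N) : β N (e i ⊗ₜ e k) =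
    if i = k then q • (e i ⊗ₜ[F] e i)
    else if i < k then e k ⊗ₜ[F] e i
    else e k ⊗ₜ[F] e i + (q - q⁻¹) • (e i ⊗ₜ[F] e k) := by
  conv_lhs => rw [← bVV_apply, β, Module.Basis.constr_basis]

lemma slice_β {N : ℕ} (i k : Fin N) : slice k (β N (e i ⊗ₜ e k)) = βDiag i k • e i := by
  rw [β_tmul, βDiag]
  rcases lt_trichotomy i k with h | rfl | h
  · simp [h, h.ne, h.not_gt, e_apply, h.ne']
  · simp [e_apply]
  · simp [h.ne', h.not_gt, h, e_apply, h.ne]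

section Levi

variable (m n : ℕ)

lemma sum_univ_ι₁_add_ι₂ {M : Type*} [AddCommMonoid M] (f : Fin (m + n) → M) :
    ∑ a, f a = ∑ i, f (ι₁ m n i) + ∑ j, f (ι₂ m n j) :=
  Fin.sum_univ_add f

lemma linearMap_ext_blocks {M : Type*} [AddCommMonoid M] [Module F M]
    {f g : V (m + n) →ₗ[F] M} (h₁ : ∀ i, f (e (ι₁ m n i)) = g (e (ι₁ m n i)))
    (h₂ : ∀ j, f (e (ι₂ m n j)) = g (e (ι₂ m n j))) : f = g :=
  (bV (m + n)).ext fun a => by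
    induction a using Fin.addCases with
    | left i => exact h₁ i
    | right j => exact h₂ j

lemma ι₁_ne_ι₂ (i : Fin m) (j : Fin n) : ι₁ m n i ≠ ι₂ m n j := by
  simp only [ι₁, ι₂, ne_eq, Fin.ext_iff, Fin.val_castAdd, Fin.val_natAdd]
  omega

lemma levi_tmul_ι₁_ι₁ (i j : Fin m) : levi m n (e (ι₁ m n i) ⊗ₜ e (ι₁ m n j)) =
    TensorProduct.map (emb (ι₁ m n)) (emb (ι₁ m n)) (β m (e i ⊗ₜ e j)) := by
  rw [← bVV_apply, levi, Module.Basis.constr_basis]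
  simp [ι₁]

lemma levi_tmul_ι₂_ι₂ (i j : Fin n) : levi m n (e (ι₂ m n i) ⊗ₜ e (ι₂ m n j)) =
    TensorProduct.map (emb (ι₂ m n)) (emb (ι₂ m n)) (β n (e i ⊗ₜ e j)) := by
  rw [← bVV_apply, levi, Module.Basis.constr_basis]
  simp [ι₂]

lemma levi_tmul_ι₁_ι₂ (i : Fin m) (j : Fin n) :
    levi m n (e (ι₁ m n i) ⊗ₜ e (ι₂ m n j)) = e (ι₂ m n j) ⊗ₜ e (ι₁ m n i) := by
  rw [← bVV_apply, levi, Module.Basis.constr_basis]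
  simp [ι₁, ι₂]

lemma levi_tmul_ι₂_ι₁ (i : Fin n) (j : Fin m) :
    levi m n (e (ι₂ m n i) ⊗ₜ e (ι₁ m n j)) = e (ι₁ m n j) ⊗ₜ e (ι₂ m n i) := by
  rw [← bVV_apply, levi, Module.Basis.constr_basis]
  simp [ι₁, ι₂]

lemma slice_levi_ι₁_ι₁ (i k : Fin m) :
    slice (ι₁ m n k) (levi m n (e (ι₁ m n i) ⊗ₜ e (ι₁ m n k))) = βDiag i k • e (ι₁ m n i) := by
  rw [levi_tmul_ι₁_ι₁, slice_map_emb (f := ι₁ m n) (Fin.castAdd_injective m n), slice_β,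
    map_smul, emb_e]

lemma slice_levi_ι₂_ι₂ (i k : Fin n) :
    slice (ι₂ m n k) (levi m n (e (ι₂ m n i) ⊗ₜ e (ι₂ m n k))) = βDiag i k • e (ι₂ m n i) := by
  rw [levi_tmul_ι₂_ι₂, slice_map_emb (f := ι₂ m n) (Fin.natAdd_injective n m), slice_β,
    map_smul, emb_e]

lemma slice_levi_ι₁_ι₂ (i : Fin m) (k : Fin n) :
    slice (ι₂ m n k) (levi m n (e (ι₁ m n i) ⊗ₜ e (ι₂ m n k))) = 0 := by
  rw [levi_tmul_ι₁_ι₂, slice_tmul, e_apply, if_neg (ι₁_ne_ι₂ m n i k).symm, zero_smul]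

lemma slice_levi_ι₂_ι₁ (i : Fin n) (k : Fin m) :
    slice (ι₁ m n k) (levi m n (e (ι₂ m n i) ⊗ₜ e (ι₁ m n k))) = 0 := by
  rw [levi_tmul_ι₂_ι₁, slice_tmul, e_apply, if_neg (ι₁_ne_ι₂ m n k i), zero_smul]

def Kweight : Fin (m + n) → F := Fin.addCases (qWeight m) (qWeight n)

lemma Kweight_ι₁ (i : Fin m) : Kweight m n (ι₁ m n i) = qWeight m i := Fin.addCases_left i

lemma Kweight_ι₂ (j : Fin n) : Kweight m n (ι₂ m n j) = qWeight n j := Fin.addCases_right j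

lemma Kmn_e (a : Fin (m + n)) : Kmn m n (e a) = Kweight m n a • e a := by
  rw [Kmn, ← bV_apply, Module.Basis.constr_basis]
  induction a using Fin.addCases with
  | left i => simp [Kweight, qWeight]
  | right j => simp [Kweight, qWeight]

lemma P1_e_ι₁ (i : Fin m) : P1 m n (e (ι₁ m n i)) = e (ι₁ m n i) := by
  rw [P1, ← bV_apply, Module.Basis.constr_basis]
  simp [ι₁]

lemma P1_e_ι₂ (j : Fin n) : P1 m n (e (ι₂ m n j)) = 0 := by
  rw [P1, ← bV_apply, Module.Basis.constr_basis]
  simp [ι₂]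

lemma P2_e_ι₁ (i : Fin m) : P2 m n (e (ι₁ m n i)) = 0 := by
  rw [P2, ← bV_apply, Module.Basis.constr_basis]
  simp [ι₁, not_le.mpr i.isLt]

lemma P2_e_ι₂ (j : Fin n) : P2 m n (e (ι₂ m n j)) = e (ι₂ m n j) := by
  rw [P2, ← bV_apply, Module.Basis.constr_basis]
  simp [ι₂]

lemma ptr_twist_e_ι₁ (i : Fin m) :
    ptr (TensorProduct.map LinearMap.id (Kmn m n) ∘ₗ levi m n) (e (ι₁ m n i))
      = q ^ (m : ℤ) • e (ι₁ m n i) := by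
  simp only [ptr_map_id_comp_apply_e (Kmn_e m n), sum_univ_ι₁_add_ι₂, Kweight_ι₁, Kweight_ι₂,
    slice_levi_ι₁_ι₁, slice_levi_ι₁_ι₂, smul_zero, Finset.sum_const_zero, add_zero, smul_smul,
    ← Finset.sum_smul, mul_comm (qWeight m _), sum_βDiag_mul_qWeight]

lemma ptr_twist_e_ι₂ (j : Fin n) :
    ptr (TensorProduct.map LinearMap.id (Kmn m n) ∘ₗ levi m n) (e (ι₂ m n j))
      = q ^ (n : ℤ) • e (ι₂ m n j) := by
  simp only [ptr_map_id_comp_apply_e (Kmn_e m n), sum_univ_ι₁_add_ι₂, Kweight_ι₁, Kweight_ι₂,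
    slice_levi_ι₂_ι₂, slice_levi_ι₂_ι₁, smul_zero, Finset.sum_const_zero, zero_add, smul_smul,
    ← Finset.sum_smul, mul_comm (qWeight n _), sum_βDiag_mul_qWeight]

end Levi

/-- (a) The modified twist relation
`ptr₂((id ⊗ K_{m,n}) ∘ c_{m,n}) = q^m • P₁ + q^n • P₂`;
(b) the modified dimension relation `trace K_{m,n} = [m]_q + [n]_q`. -/
theorem levi_modified_twist_and_dimension (m n : ℕ) :
    ptr (TensorProduct.map LinearMap.id (Kmn m n) ∘ₗ levi m n)
      = (q ^ (m : ℤ)) • P1 m n + (q ^ (n : ℤ)) • P2 m n ∧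
    LinearMap.trace F (V (m + n)) (Kmn m n) = qint m + qint n := by
  constructor
  · refine linearMap_ext_blocks m n (fun i => ?_) (fun j => ?_)
    · rw [ptr_twist_e_ι₁, LinearMap.add_apply, LinearMap.smul_apply, LinearMap.smul_apply,
        P1_e_ι₁, P2_e_ι₁, smul_zero, add_zero]
    · rw [ptr_twist_e_ι₂, LinearMap.add_apply, LinearMap.smul_apply, LinearMap.smul_apply,
        P1_e_ι₂, P2_e_ι₂, smul_zero, zero_add]
  · rw [trace_eq_sum_of_apply_e (Kmn_e m n), sum_univ_ι₁_add_ι₂, qint_eq_sum_qWeight,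
      qint_eq_sum_qWeight]
    simp only [Kweight_ι₁, Kweight_ι₂]

end
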